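/- Let (Ω, 𝓕, ℙ) be a probability space and let X, Y, M : Ω → ℝ be random variables with X integrable, M of standard normal law 𝒩(0,1), and M independent of Y. Let ℰ be the class of all absolutely continuous functions f : ℝ → ℝ with ‖f‖_∞ ≤ √(π/2) and ‖f′‖_∞ ≤ 2. Then d_PTV(ℙ_{(X,Y)}, ℙ_M ⊗ ℙ_Y) ≤ sup over f ∈ ℰ and Borel sets B ⊆ ℝ of |E[(f′(X) − X·f(X)) · 1_B(Y)]|. -/

import Mathlib

open MeasureTheory ProbabilityTheory Real
open Set Filter
open scoped ENNReal NNReal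

/-- A function `f : ℝ → ℝ` is (locally) absolutely continuous:  its derivative is locally
integrable and the fundamental theorem of calculus holds, i.e.
`f b − f a = ∫_a^b f′(t) dt` for all `a, b`. -/
def AbsolutelyContinuousFun (f : ℝ → ℝ) : Prop :=
  MeasureTheory.LocallyIntegrable (deriv f) volume ∧
    ∀ a b : ℝ, f b - f a = ∫ t in a..b, deriv f t

lemma sqrt2pi_div_two : Real.sqrt (2*π) / 2 = Real.sqrt (π/2) := by
  rw [Real.sqrt_mul (by norm_num : (0:ℝ) ≤ 2), Real.sqrt_div (le_of_lt pi_pos) 2]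
  rw [div_eq_div_iff (by norm_num) (Real.sqrt_pos.2 two_pos).ne']
  nlinarith [Real.sq_sqrt (le_of_lt two_pos), Real.sqrt_nonneg (2:ℝ), Real.sqrt_nonneg π]

lemma psi_integrable : Integrable (fun t : ℝ => exp (-t^2/2)) := by
  have := integrable_exp_neg_mul_sq (b := (1:ℝ)/2) (by norm_num)
  convert this using 2 with t
  ring_nf

lemma psi_cont : Continuous (fun t : ℝ => exp (-t^2/2)) := by continuity

lemma psi_total : ∫ t : ℝ, exp (-t^2/2) = Real.sqrt (2*π) := by
  have h := integral_gaussian ((1:ℝ)/2)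
  rw [show π / ((1:ℝ)/2) = 2*π by ring] at h
  rw [← h]
  congr 1 with t
  ring_nf

lemma psi_Ioi_zero : ∫ t in Ioi (0:ℝ), exp (-t^2/2) = Real.sqrt (π/2) := by
  have h := integral_gaussian_Ioi ((1:ℝ)/2)
  rw [show π / ((1:ℝ)/2) = 2*π by ring, sqrt2pi_div_two] at h
  rw [← h]
  congr 1 with t
  ring_nf

-- x * ∫_{Ioi x} ψ ≤ e^{-x²/2} for x ≥ 0
lemma tmul_integral (x : ℝ) :
    ∫ t in Ioi x, t * exp (-t^2/2) = exp (-x^2/2) := by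
  have hint : IntegrableOn (fun t : ℝ => t * exp (-t^2/2)) (Ioi x) := by
    have := integrable_mul_exp_neg_mul_sq (b := (1:ℝ)/2) (by norm_num)
    refine (Integrable.integrableOn ?_)
    convert this using 2 with t
    ring_nf
  have hderiv : ∀ t ∈ Ioi x, HasDerivAt (fun t : ℝ => -exp (-t^2/2)) (t * exp (-t^2/2)) t := by
    intro t _
    have h1 : HasDerivAt (fun t : ℝ => -t^2/2) (-t) t := by
      have := ((hasDerivAt_pow 2 t).neg).div_const 2
      simpa using this.congr_deriv (by push_cast; ring)
    have := (h1.exp).neg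
    exact this.congr_deriv (by ring)
  have htend : Tendsto (fun t : ℝ => -exp (-t^2/2)) atTop (nhds 0) := by
    rw [show (0:ℝ) = -0 by ring]
    refine Tendsto.neg ?_
    refine Real.tendsto_exp_atBot.comp ?_
    apply Tendsto.atBot_div_const two_pos
    exact tendsto_neg_atTop_atBot.comp (tendsto_pow_atTop (two_ne_zero))
  have := integral_Ioi_of_hasDerivAt_of_tendsto
    (Continuous.continuousWithinAt (by continuity)) hderiv hint htend
  rw [this]; ring

lemma trans_integral (x : ℝ) :
    ∫ t in Ioi x, exp (-(t-x)^2/2) = ∫ t in Ioi (0:ℝ), exp (-t^2/2) := by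
  have h := (measurePreserving_add_right (volume : Measure ℝ) x).setIntegral_preimage_emb
    (measurableEmbedding_addRight x) (fun t => exp (-(t-x)^2/2)) (Ioi x)
  have hpre : (fun y : ℝ => y + x) ⁻¹' (Ioi x) = Ioi 0 := by
    ext y; simp [mem_Ioi]
  rw [hpre] at h
  rw [← h]
  congr 1 with y
  simp

lemma mills (x : ℝ) (hx : 0 ≤ x) :
    ∫ t in Ioi x, exp (-t^2/2) ≤ Real.sqrt (π/2) * exp (-x^2/2) := by
  have step : ∫ t in Ioi x, exp (-t^2/2)
      ≤ ∫ t in Ioi x, exp (-x^2/2) * exp (-(t-x)^2/2) := by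
    refine setIntegral_mono_on psi_integrable.integrableOn ?_ measurableSet_Ioi ?_
    · exact ((psi_integrable.comp_sub_right x).const_mul _).integrableOn
    · intro t ht
      rw [← Real.exp_add, Real.exp_le_exp]
      nlinarith [le_of_lt (mem_Ioi.1 ht)]
  rw [integral_const_mul, trans_integral, psi_Ioi_zero] at step
  linarith [step]

lemma mills_mul (x : ℝ) (hx : 0 ≤ x) :
    x * ∫ t in Ioi x, exp (-t^2/2) ≤ exp (-x^2/2) := by
  have hint : IntegrableOn (fun t : ℝ => t * exp (-t^2/2)) (Ioi x) := by
    have := integrable_mul_exp_neg_mul_sq (b := (1:ℝ)/2) (by norm_num)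
    refine Integrable.integrableOn ?_
    convert this using 2 with t
    ring_nf
  have step : ∫ t in Ioi x, x * exp (-t^2/2) ≤ ∫ t in Ioi x, t * exp (-t^2/2) := by
    refine setIntegral_mono_on (psi_integrable.const_mul x).integrableOn hint
      measurableSet_Ioi ?_
    intro t ht
    have := le_of_lt (mem_Ioi.1 ht)
    nlinarith [Real.exp_pos (-t^2/2)]
  rw [integral_const_mul] at step
  rw [tmul_integral] at step
  exact step

lemma psi_Iic_symm (x : ℝ) :
    ∫ t in Iic x, exp (-t^2/2) = ∫ t in Ioi (-x), exp (-t^2/2) := by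
  have h := integral_comp_neg_Ioi (-x) (fun t : ℝ => exp (-t^2/2))
  simp only [neg_neg] at h
  rw [← h]
  congr 1 with t
  simp

lemma hasDerivAt_integral_Iic {g : ℝ → ℝ} (hgi : Integrable g) (hgc : Continuous g) (x : ℝ) :
    HasDerivAt (fun y => ∫ t in Iic y, g t) (g x) x := by
  have heq : ∀ y : ℝ, ∫ t in Iic y, g t = (∫ t in Iic x, g t) + ∫ t in x..y, g t := by
    intro y
    rw [← intervalIntegral.integral_Iic_sub_Iic hgi.integrableOn hgi.integrableOn]
    ring
  have hd : HasDerivAt (fun y => ∫ t in x..y, g t) (g x) x := by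
    refine intervalIntegral.integral_hasDerivAt_right hgi.intervalIntegrable
      hgc.aestronglyMeasurable.stronglyMeasurableAtFilter hgc.continuousAt
  have h2 := (hasDerivAt_const x (∫ t in Iic x, g t)).add hd
  rw [zero_add] at h2
  refine HasDerivAt.congr_of_eventuallyEq h2 ?_
  exact Eventually.of_forall fun y => heq y

lemma gaussianPDFReal_zero_one (x : ℝ) :
    gaussianPDFReal 0 1 x = (Real.sqrt (2*π))⁻¹ * exp (-x^2/2) := by
  simp only [gaussianPDFReal, NNReal.coe_one, mul_one, sub_zero]

lemma integral_gaussianReal_eq (g : ℝ → ℝ) :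
    ∫ x, g x ∂(gaussianReal 0 1) = ∫ x, gaussianPDFReal 0 1 x * g x := by
  rw [gaussianReal_of_var_ne_zero 0 one_ne_zero]
  have hpdf : gaussianPDF 0 1 = fun x => ((gaussianPDFReal 0 1 x).toNNReal : ℝ≥0∞) := by
    funext x; rw [gaussianPDF_def]; rfl
  rw [hpdf]
  rw [integral_withDensity_eq_integral_smul
    ((measurable_gaussianPDFReal 0 1).real_toNNReal) g]
  congr 1 with x
  rw [NNReal.smul_def, Real.coe_toNNReal _ (gaussianPDFReal_nonneg 0 1 x)]
  rfl

lemma stein_solution (h : ℝ → ℝ) (hcont : Continuous h)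
    (h0 : ∀ x, 0 ≤ h x) (h1 : ∀ x, h x ≤ 1) :
    ∃ f : ℝ → ℝ, AbsolutelyContinuousFun f ∧ (∀ x, |f x| ≤ Real.sqrt (π/2)) ∧
      (∀ x, |deriv f x| ≤ 2) ∧
      ∀ x, deriv f x - x * f x = h x - ∫ y, h y ∂(gaussianReal 0 1) := by
  set c : ℝ := ∫ y, h y ∂(gaussianReal 0 1) with hc_def
  have hint_h : Integrable h (gaussianReal 0 1) := by
    refine Integrable.mono' (integrable_const 1) hcont.aestronglyMeasurable ?_
    exact Eventually.of_forall fun x => by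
      rw [Real.norm_eq_abs, abs_le]; exact ⟨by linarith [h0 x], h1 x⟩
  have hc0 : 0 ≤ c := integral_nonneg h0
  have hc1 : c ≤ 1 := by
    calc c ≤ ∫ _, (1:ℝ) ∂(gaussianReal 0 1) :=
          integral_mono hint_h (integrable_const 1) h1
    _ = 1 := by simp
  have hhc : ∀ t, |h t - c| ≤ 1 := by
    intro t; rw [abs_le]; exact ⟨by linarith [h0 t], by linarith [h1 t]⟩
  set g : ℝ → ℝ := fun t => (h t - c) * exp (-t^2/2) with hg_def
  have hgc : Continuous g := by
    apply Continuous.mul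
    · exact hcont.sub continuous_const
    · exact psi_cont
  have hgnorm : ∀ t, ‖g t‖ ≤ exp (-t^2/2) := by
    intro t
    rw [Real.norm_eq_abs, hg_def, abs_mul, abs_of_pos (Real.exp_pos _)]
    calc |h t - c| * exp (-t^2/2) ≤ 1 * exp (-t^2/2) := by
          exact mul_le_mul_of_nonneg_right (hhc t) (Real.exp_pos _).le
    _ = exp (-t^2/2) := one_mul _
  have hgi : Integrable g := by
    refine Integrable.mono' psi_integrable hgc.aestronglyMeasurable ?_
    exact Eventually.of_forall hgnorm
  -- total integral of g is zero
  have hhpsi_int : Integrable (fun t => h t * exp (-t^2/2)) := by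
    refine Integrable.mono' psi_integrable
      ((hcont.mul psi_cont).aestronglyMeasurable) ?_
    refine Eventually.of_forall fun t => ?_
    rw [Real.norm_eq_abs, abs_mul, abs_of_pos (Real.exp_pos _),
      abs_of_nonneg (h0 t)]
    nlinarith [Real.exp_pos (-t^2/2), h1 t, h0 t]
  have hK : (0:ℝ) < Real.sqrt (2*π) :=
    Real.sqrt_pos.2 (by positivity)
  have hc_eq : ∫ t, h t * exp (-t^2/2) = Real.sqrt (2*π) * c := by
    rw [hc_def, integral_gaussianReal_eq]
    rw [← integral_const_mul]
    congr 1 with t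
    rw [gaussianPDFReal_zero_one]
    field_simp
  have htotal : ∫ t, g t = 0 := by
    have : ∫ t, g t = (∫ t, h t * exp (-t^2/2)) - c * ∫ t, exp (-t^2/2) := by
      rw [← integral_const_mul, ← integral_sub hhpsi_int (psi_integrable.const_mul c)]
      congr 1 with t
      ring
    rw [this, hc_eq, psi_total]
    ring
  set F : ℝ → ℝ := fun x => ∫ t in Iic x, g t with hF_def
  have hF : ∀ x, HasDerivAt F (g x) x := hasDerivAt_integral_Iic hgi hgc
  set f : ℝ → ℝ := fun x => exp (x^2/2) * F x with hf_def
  have hexp1 : ∀ x : ℝ, exp (x^2/2) * exp (-x^2/2) = 1 := by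
    intro x; rw [← Real.exp_add]; ring_nf; exact Real.exp_zero
  have hfd : ∀ x, HasDerivAt f (x * f x + (h x - c)) x := by
    intro x
    have e1 : HasDerivAt (fun x : ℝ => x^2/2) x x := by
      have := (hasDerivAt_pow 2 x).div_const 2
      refine this.congr_deriv ?_
      push_cast; ring
    have e2 : HasDerivAt (fun x : ℝ => exp (x^2/2)) (x * exp (x^2/2)) x := by
      have := e1.exp
      refine this.congr_deriv ?_
      ring
    have := e2.mul (hF x)
    refine this.congr_deriv ?_
    have hgx : exp (x^2/2) * g x = h x - c := by
      rw [hg_def]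
      calc exp (x^2/2) * ((h x - c) * exp (-x^2/2))
          = (h x - c) * (exp (x^2/2) * exp (-x^2/2)) := by ring
      _ = h x - c := by rw [hexp1]; ring
    rw [hgx, hf_def]
    ring
  have hderiv_f : ∀ x, deriv f x = x * f x + (h x - c) := fun x => (hfd x).deriv
  -- bounds on F
  have habsF : ∀ x : ℝ, |F x| ≤ ∫ t in Ioi |x|, exp (-t^2/2) := by
    intro x
    rcases le_total 0 x with hx | hx
    · -- x ≥ 0 : F x = - ∫ Ioi x g
      have hsplit : F x + ∫ t in Ioi x, g t = 0 := by
        rw [hF_def]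
        rw [intervalIntegral.integral_Iic_add_Ioi hgi.integrableOn hgi.integrableOn]
        exact htotal
      have : |F x| = |∫ t in Ioi x, g t| := by
        rw [show F x = -∫ t in Ioi x, g t by linarith]
        rw [abs_neg]
      rw [this, abs_of_nonneg hx]
      calc |∫ t in Ioi x, g t| ≤ ∫ t in Ioi x, ‖g t‖ := norm_integral_le_integral_norm g
      _ ≤ ∫ t in Ioi x, exp (-t^2/2) := by
          refine setIntegral_mono_on hgi.norm.integrableOn psi_integrable.integrableOn
            measurableSet_Ioi fun t _ => hgnorm t
    · -- x ≤ 0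
      rw [abs_of_nonpos hx, hF_def]
      calc |∫ t in Iic x, g t| ≤ ∫ t in Iic x, ‖g t‖ := norm_integral_le_integral_norm g
      _ ≤ ∫ t in Iic x, exp (-t^2/2) := by
          refine setIntegral_mono_on hgi.norm.integrableOn psi_integrable.integrableOn
            measurableSet_Iic fun t _ => hgnorm t
      _ = ∫ t in Ioi (-x), exp (-t^2/2) := psi_Iic_symm x
  have hFb : ∀ x : ℝ, |F x| ≤ Real.sqrt (π/2) * exp (-x^2/2) := by
    intro x
    refine (habsF x).trans ?_
    have := mills |x| (abs_nonneg x)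
    rwa [sq_abs] at this
  have hxFb : ∀ x : ℝ, |x * F x| ≤ exp (-x^2/2) := by
    intro x
    rw [abs_mul]
    calc |x| * |F x| ≤ |x| * ∫ t in Ioi |x|, exp (-t^2/2) :=
          mul_le_mul_of_nonneg_left (habsF x) (abs_nonneg x)
    _ ≤ exp (-|x|^2/2) := mills_mul |x| (abs_nonneg x)
    _ = exp (-x^2/2) := by rw [sq_abs]
  have hfb : ∀ x, |f x| ≤ Real.sqrt (π/2) := by
    intro x
    rw [hf_def]
    calc |exp (x^2/2) * F x| = exp (x^2/2) * |F x| := by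
          rw [abs_mul, abs_of_pos (Real.exp_pos _)]
    _ ≤ exp (x^2/2) * (Real.sqrt (π/2) * exp (-x^2/2)) :=
          mul_le_mul_of_nonneg_left (hFb x) (Real.exp_pos _).le
    _ = Real.sqrt (π/2) * (exp (x^2/2) * exp (-x^2/2)) := by ring
    _ = Real.sqrt (π/2) := by rw [hexp1]; ring
  have hxfb : ∀ x, |x * f x| ≤ 1 := by
    intro x
    have : x * f x = exp (x^2/2) * (x * F x) := by rw [hf_def]; ring
    rw [this]
    calc |exp (x^2/2) * (x * F x)| = exp (x^2/2) * |x * F x| := by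
          rw [abs_mul, abs_of_pos (Real.exp_pos _)]
    _ ≤ exp (x^2/2) * exp (-x^2/2) :=
          mul_le_mul_of_nonneg_left (hxFb x) (Real.exp_pos _).le
    _ = 1 := hexp1 x
  have hdb : ∀ x, |deriv f x| ≤ 2 := by
    intro x
    rw [hderiv_f x]
    calc |x * f x + (h x - c)| ≤ |x * f x| + |h x - c| := abs_add_le _ _
    _ ≤ 1 + 1 := add_le_add (hxfb x) (hhc x)
    _ = 2 := by norm_num
  have hfcont : Continuous f := by
    rw [continuous_iff_continuousAt]
    exact fun x => (hfd x).continuousAt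
  have hdc : Continuous (deriv f) := by
    have : deriv f = fun x => x * f x + (h x - c) := funext hderiv_f
    rw [this]
    exact ((continuous_id.mul hfcont).add (hcont.sub continuous_const))
  refine ⟨f, ⟨hdc.locallyIntegrable, ?_⟩, hfb, hdb, fun x => by rw [hderiv_f x]; ring⟩
  intro a b
  rw [intervalIntegral.integral_eq_sub_of_hasDerivAt (fun t _ => by
    have := hfd t; rwa [← hderiv_f t] at this) (hdc.intervalIntegrable a b)]

lemma clamp_abs (v t : ℝ) (h0 : 0 ≤ v) (h1 : v ≤ 1) :
    |max 0 (min 1 t) - v| ≤ |t - v| := by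
  rcases le_total t 0 with ht | ht
  · rw [min_eq_right (ht.trans zero_le_one), max_eq_left ht,
      abs_of_nonpos (by linarith), abs_of_nonpos (by linarith)]
    linarith
  · rcases le_total 1 t with ht1 | ht1
    · rw [min_eq_left ht1, max_eq_right zero_le_one,
        abs_of_nonneg (by linarith), abs_of_nonneg (by linarith)]
      linarith
    · rw [min_eq_right ht1, max_eq_right ht]

lemma abs_indicator_one_le (B : Set ℝ) (y : ℝ) :
    |B.indicator (fun _ => (1:ℝ)) y| ≤ 1 := by
  by_cases hy : y ∈ B <;> simp [hy]

lemma indicator_one_nonneg (B : Set ℝ) (y : ℝ) :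
    0 ≤ B.indicator (fun _ => (1:ℝ)) y := by
  by_cases hy : y ∈ B <;> simp [hy]

lemma indicator_one_le_one (B : Set ℝ) (y : ℝ) :
    B.indicator (fun _ => (1:ℝ)) y ≤ 1 := by
  by_cases hy : y ∈ B <;> simp [hy]

lemma integrable_of_bounded' {Ω : Type*} {m : MeasurableSpace Ω} {P : Measure Ω}
    [IsFiniteMeasure P] {φ : Ω → ℝ} (hm : AEStronglyMeasurable φ P) (C : ℝ)
    (hb : ∀ ω, |φ ω| ≤ C) : Integrable φ P :=
  Integrable.mono' (integrable_const C) hm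
    (Eventually.of_forall fun ω => by rw [Real.norm_eq_abs]; exact hb ω)

lemma le_ciSup_of_bound {α : Sort*} (f : α → ℝ) (K : ℝ) (hK : ∀ a, f a ≤ K) (a : α) :
    f a ≤ ⨆ b, f b :=
  le_ciSup ⟨K, by rintro _ ⟨b, rfl⟩; exact hK b⟩ a

lemma iSup_bound_helper {T : (ℝ → ℝ) → Set ℝ → ℝ} {Pred : (ℝ → ℝ) → Prop} {K : ℝ}
    (hK0 : 0 ≤ K) (hTK : ∀ f B, Pred f → T f B ≤ K)
    {f : ℝ → ℝ} {B : Set ℝ} (hf : Pred f) (hB : MeasurableSet B) :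
    T f B ≤ ⨆ (f : ℝ → ℝ) (_ : Pred f) (B : Set ℝ) (_ : MeasurableSet B), T f B := by
  have h1 : T f B ≤ ⨆ (_ : MeasurableSet B), T f B :=
    le_ciSup_of_bound (fun _ => T f B) K (fun _ => hTK f B hf) hB
  have h2 : (⨆ (_ : MeasurableSet B), T f B) ≤ ⨆ (B : Set ℝ) (_ : MeasurableSet B), T f B :=
    le_ciSup_of_bound (fun B' => ⨆ (_ : MeasurableSet B'), T f B') K
      (fun B' => Real.iSup_le (fun _ => hTK f B' hf) hK0) B
  have h3 : (⨆ (B : Set ℝ) (_ : MeasurableSet B), T f B)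
      ≤ ⨆ (_ : Pred f) (B : Set ℝ) (_ : MeasurableSet B), T f B :=
    le_ciSup_of_bound (fun _ : Pred f => ⨆ (B : Set ℝ) (_ : MeasurableSet B), T f B) K
      (fun _ => Real.iSup_le (fun B' => Real.iSup_le (fun _ => hTK f B' hf) hK0) hK0) hf
  have h4 : (⨆ (_ : Pred f) (B : Set ℝ) (_ : MeasurableSet B), T f B)
      ≤ ⨆ (f : ℝ → ℝ) (_ : Pred f) (B : Set ℝ) (_ : MeasurableSet B), T f B :=
    le_ciSup_of_bound (fun f' => ⨆ (_ : Pred f') (B : Set ℝ) (_ : MeasurableSet B), T f' B) K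
      (fun f' => Real.iSup_le (fun hf' =>
        Real.iSup_le (fun B' => Real.iSup_le (fun _ => hTK f' B' hf') hK0) hK0) hK0) f
  exact h1.trans (h2.trans (h3.trans h4))

section main
variable {Ω : Type*} {mΩ : MeasurableSpace Ω}

noncomputable def steinSup (P : Measure Ω) (X Y : Ω → ℝ) : ℝ :=
  ⨆ (f : ℝ → ℝ) (_ : AbsolutelyContinuousFun f ∧
      (∀ x : ℝ, |f x| ≤ Real.sqrt (π / 2)) ∧ (∀ x : ℝ, |deriv f x| ≤ 2))
    (B : Set ℝ) (_ : MeasurableSet B),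
    |∫ ω, (deriv f (X ω) - X ω * f (X ω)) *
      B.indicator (fun _ => (1 : ℝ)) (Y ω) ∂P|

lemma steinSup_term_le (P : Measure Ω) [IsProbabilityMeasure P] (X Y : Ω → ℝ)
    (hXint : Integrable X P) (f : ℝ → ℝ) (B : Set ℝ)
    (hf : AbsolutelyContinuousFun f ∧
      (∀ x : ℝ, |f x| ≤ Real.sqrt (π / 2)) ∧ (∀ x : ℝ, |deriv f x| ≤ 2)) :
    |∫ ω, (deriv f (X ω) - X ω * f (X ω)) *
      B.indicator (fun _ => (1 : ℝ)) (Y ω) ∂P| ≤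
      2 + Real.sqrt (π / 2) * ∫ ω, |X ω| ∂P := by
  have hptw : ∀ ω, ‖(deriv f (X ω) - X ω * f (X ω)) *
      B.indicator (fun _ => (1 : ℝ)) (Y ω)‖ ≤ 2 + Real.sqrt (π / 2) * |X ω| := by
    intro ω
    rw [Real.norm_eq_abs, abs_mul]
    have h1 : |deriv f (X ω) - X ω * f (X ω)| ≤ 2 + Real.sqrt (π / 2) * |X ω| := by
      calc |deriv f (X ω) - X ω * f (X ω)| ≤ |deriv f (X ω)| + |X ω * f (X ω)| :=
            abs_sub _ _
      _ ≤ 2 + Real.sqrt (π / 2) * |X ω| := by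
          refine add_le_add (hf.2.2 _) ?_
          rw [abs_mul, mul_comm]
          exact mul_le_mul_of_nonneg_right (hf.2.1 _) (abs_nonneg _)
    calc |deriv f (X ω) - X ω * f (X ω)| * |B.indicator (fun _ => (1:ℝ)) (Y ω)|
        ≤ |deriv f (X ω) - X ω * f (X ω)| * 1 :=
          mul_le_mul_of_nonneg_left (abs_indicator_one_le B (Y ω)) (abs_nonneg _)
    _ = |deriv f (X ω) - X ω * f (X ω)| := mul_one _
    _ ≤ 2 + Real.sqrt (π / 2) * |X ω| := h1
  have hbint : Integrable (fun ω => 2 + Real.sqrt (π / 2) * |X ω|) P :=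
    (integrable_const 2).add (hXint.abs.const_mul _)
  rw [← Real.norm_eq_abs]
  calc ‖∫ ω, (deriv f (X ω) - X ω * f (X ω)) *
      B.indicator (fun _ => (1 : ℝ)) (Y ω) ∂P‖
      ≤ ∫ ω, ‖(deriv f (X ω) - X ω * f (X ω)) *
        B.indicator (fun _ => (1 : ℝ)) (Y ω)‖ ∂P := norm_integral_le_integral_norm _
  _ ≤ ∫ ω, (2 + Real.sqrt (π / 2) * |X ω|) ∂P :=
      integral_mono_of_nonneg (Eventually.of_forall fun ω => norm_nonneg _)
        hbint (Eventually.of_forall hptw)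
  _ = 2 + Real.sqrt (π / 2) * ∫ ω, |X ω| ∂P := by
      rw [integral_add (integrable_const 2) (hXint.abs.const_mul _)]
      simp [integral_const, measure_univ, integral_const_mul]

lemma le_steinSup (P : Measure Ω) [IsProbabilityMeasure P] (X Y : Ω → ℝ)
    (hXint : Integrable X P) {f : ℝ → ℝ} {B : Set ℝ}
    (hf : AbsolutelyContinuousFun f ∧
      (∀ x : ℝ, |f x| ≤ Real.sqrt (π / 2)) ∧ (∀ x : ℝ, |deriv f x| ≤ 2))
    (hB : MeasurableSet B) :
    |∫ ω, (deriv f (X ω) - X ω * f (X ω)) *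
      B.indicator (fun _ => (1 : ℝ)) (Y ω) ∂P| ≤ steinSup P X Y := by
  have hK0 : (0:ℝ) ≤ 2 + Real.sqrt (π / 2) * ∫ ω, |X ω| ∂P := by
    have : 0 ≤ ∫ ω, |X ω| ∂P := integral_nonneg fun ω => abs_nonneg _
    positivity
  exact iSup_bound_helper hK0 (fun f B hf => steinSup_term_le P X Y hXint f B hf) hf hB

lemma steinSup_nonneg (P : Measure Ω) [IsProbabilityMeasure P] (X Y : Ω → ℝ)
    (hXint : Integrable X P) : 0 ≤ steinSup P X Y := by
  have hPred0 : AbsolutelyContinuousFun (fun _ => (0:ℝ)) ∧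
      (∀ x : ℝ, |(fun _ => (0:ℝ)) x| ≤ Real.sqrt (π / 2)) ∧
      (∀ x : ℝ, |deriv (fun _ => (0:ℝ)) x| ≤ 2) := by
    refine ⟨⟨?_, ?_⟩, ?_, ?_⟩
    · simp only [deriv_const']
      exact continuous_const.locallyIntegrable
    · intro a b; simp [deriv_const']
    · intro x; simp only [abs_zero]; positivity
    · intro x; simp [deriv_const']
  exact le_trans (abs_nonneg _) (le_steinSup P X Y hXint hPred0 MeasurableSet.empty)

lemma core_bound (P : Measure Ω) [IsProbabilityMeasure P] (X Y : Ω → ℝ)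
    (hX : Measurable X) (hY : Measurable Y) (hXint : Integrable X P)
    {A B : Set ℝ} (hA : MeasurableSet A) (hB : MeasurableSet B) :
    |(P (X ⁻¹' A ∩ Y ⁻¹' B)).toReal -
      ((gaussianReal 0 1) A).toReal * (P (Y ⁻¹' B)).toReal| ≤ steinSup P X Y := by
  refine le_of_forall_pos_le_add fun ε hε => ?_
  set γ : Measure ℝ := gaussianReal 0 1 with hγ_def
  haveI : IsProbabilityMeasure (P.map X) := Measure.isProbabilityMeasure_map hX.aemeasurable
  set ρ : Measure ℝ := P.map X + γ with hρ_def
  haveI : IsFiniteMeasure ρ := by rw [hρ_def]; infer_instance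
  set indA : ℝ → ℝ := A.indicator (fun _ => (1:ℝ)) with hindA_def
  have hindA_meas : Measurable indA := measurable_const.indicator hA
  have hindA_int_ρ : Integrable indA ρ :=
    integrable_of_bounded' hindA_meas.aestronglyMeasurable 1 (abs_indicator_one_le A)
  obtain ⟨g₀, hg₀, hg₀int⟩ :=
    hindA_int_ρ.exists_boundedContinuous_integral_sub_le (show (0:ℝ) < ε/3 by linarith)
  set h : ℝ → ℝ := fun x => max 0 (min 1 (g₀ x)) with hh_def
  have hhcont : Continuous h :=
    continuous_const.max (continuous_const.min g₀.continuous)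
  have hh0 : ∀ x, 0 ≤ h x := fun x => le_max_left 0 _
  have hh1 : ∀ x, h x ≤ 1 := fun x => max_le zero_le_one (min_le_left 1 _)
  have hdiff_bdd : ∀ x, |indA x - h x| ≤ 2 := by
    intro x
    calc |indA x - h x| ≤ |indA x| + |h x| := abs_sub _ _
    _ ≤ 1 + 1 := add_le_add (abs_indicator_one_le A x)
        (by rw [abs_of_nonneg (hh0 x)]; exact hh1 x)
    _ = 2 := by norm_num
  have hdiff_meas : Measurable (fun x => |indA x - h x|) :=
    (hindA_meas.sub hhcont.measurable).abs
  have hclose : ∫ x, |indA x - h x| ∂ρ ≤ ε/3 := by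
    have hint_diff_g : Integrable (fun x => ‖indA x - g₀ x‖) ρ :=
      (hindA_int_ρ.sub hg₀int).norm
    refine le_trans ?_ hg₀
    refine integral_mono_of_nonneg (Eventually.of_forall fun x => abs_nonneg _)
      hint_diff_g (Eventually.of_forall fun x => ?_)
    show |indA x - h x| ≤ ‖indA x - g₀ x‖
    rw [Real.norm_eq_abs]
    have := clamp_abs (indA x) (g₀ x) (indicator_one_nonneg A x) (indicator_one_le_one A x)
    rw [abs_sub_comm (indA x) (h x), abs_sub_comm (indA x) (g₀ x)]
    exact this
  have hint1 : Integrable (fun x => |indA x - h x|) (P.map X) :=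
    integrable_of_bounded' hdiff_meas.aestronglyMeasurable 2
      (fun x => by rw [abs_abs]; exact hdiff_bdd x)
  have hint2 : Integrable (fun x => |indA x - h x|) γ :=
    integrable_of_bounded' hdiff_meas.aestronglyMeasurable 2
      (fun x => by rw [abs_abs]; exact hdiff_bdd x)
  have hsplitρ : ∫ x, |indA x - h x| ∂ρ
      = (∫ x, |indA x - h x| ∂(P.map X)) + ∫ x, |indA x - h x| ∂γ := by
    rw [hρ_def]
    exact integral_add_measure hint1 hint2
  have hδ1 : ∫ x, |indA x - h x| ∂(P.map X) ≤ ε/3 := by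
    have h2 : 0 ≤ ∫ x, |indA x - h x| ∂γ := integral_nonneg fun x => abs_nonneg _
    rw [hsplitρ] at hclose; linarith
  have hδ2 : ∫ x, |indA x - h x| ∂γ ≤ ε/3 := by
    have h2 : 0 ≤ ∫ x, |indA x - h x| ∂(P.map X) := integral_nonneg fun x => abs_nonneg _
    rw [hsplitρ] at hclose; linarith
  -- Stein solution
  obtain ⟨f, hfAC, hfb, hfd, hfeq⟩ := stein_solution h hhcont hh0 hh1
  set c : ℝ := ∫ y, h y ∂γ with hc_def
  -- abbreviations
  set a : ℝ := (P (X ⁻¹' A ∩ Y ⁻¹' B)).toReal with ha_def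
  set gA : ℝ := (γ A).toReal with hgA_def
  set b : ℝ := (P (Y ⁻¹' B)).toReal with hb_def
  have hb0 : 0 ≤ b := ENNReal.toReal_nonneg
  have hb1 : b ≤ 1 := by
    rw [hb_def]
    exact ENNReal.toReal_le_of_le_ofReal zero_le_one (by simpa using prob_le_one)
  set indB : Ω → ℝ := fun ω => B.indicator (fun _ => (1:ℝ)) (Y ω) with hindB_def
  have hindB_meas : Measurable indB := (measurable_const.indicator hB).comp hY
  -- integral identities
  have hb_eq : ∫ ω, indB ω ∂P = b := by
    have heq : indB = (Y ⁻¹' B).indicator (fun _ => (1:ℝ)) := by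
      funext ω
      by_cases hω : Y ω ∈ B <;> simp [hindB_def, Set.indicator_apply, hω, Set.mem_preimage]
    rw [heq, integral_indicator_const (1:ℝ) (hY hB)]
    simp [hb_def, measureReal_def]
  have ha_eq : ∫ ω, indA (X ω) * indB ω ∂P = a := by
    have heq : (fun ω => indA (X ω) * indB ω)
        = (X ⁻¹' A ∩ Y ⁻¹' B).indicator (fun _ => (1:ℝ)) := by
      funext ω
      by_cases h1 : X ω ∈ A <;> by_cases h2 : Y ω ∈ B <;>
        simp [hindA_def, hindB_def, Set.indicator_apply, h1, h2]
    rw [heq, integral_indicator_const (1:ℝ) ((hX hA).inter (hY hB))]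
    simp [ha_def, measureReal_def]
  have hgA_eq : ∫ x, indA x ∂γ = gA := by
    rw [hindA_def, integral_indicator_const (1:ℝ) hA]
    simp [hgA_def, measureReal_def]
  -- integrability over P
  have iAB : Integrable (fun ω => indA (X ω) * indB ω) P := by
    refine integrable_of_bounded'
      (((hindA_meas.comp hX).mul hindB_meas).aestronglyMeasurable) 1 fun ω => ?_
    rw [abs_mul]
    have h1 := abs_indicator_one_le A (X ω)
    have h2 : |indB ω| ≤ 1 := abs_indicator_one_le B (Y ω)
    nlinarith [abs_nonneg (indA (X ω)), abs_nonneg (indB ω)]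
  have iB : Integrable indB P :=
    integrable_of_bounded' hindB_meas.aestronglyMeasurable 1
      fun ω => abs_indicator_one_le B _
  have hintH_γ : Integrable h γ :=
    integrable_of_bounded' hhcont.measurable.aestronglyMeasurable 1
      fun x => by rw [abs_of_nonneg (hh0 x)]; exact hh1 x
  have ihB : Integrable (fun ω => (h (X ω) - c) * indB ω) P := by
    have hc0 : 0 ≤ c := integral_nonneg hh0
    have hc1 : c ≤ 1 := by
      have h2 : c ≤ ∫ _, (1:ℝ) ∂γ := integral_mono hintH_γ (integrable_const 1) hh1
      simpa using h2
    refine integrable_of_bounded'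
      ((((hhcont.measurable.comp hX).sub measurable_const).mul
        hindB_meas).aestronglyMeasurable) 1 fun ω => ?_
    rw [abs_mul]
    have h1 : |h (X ω) - c| ≤ 1 := by
      rw [abs_le]; exact ⟨by linarith [hh0 (X ω)], by linarith [hh1 (X ω)]⟩
    have h2 : |indB ω| ≤ 1 := abs_indicator_one_le B (Y ω)
    nlinarith [abs_nonneg (h (X ω) - c), abs_nonneg (indB ω)]
  have iDiffB : Integrable (fun ω => (indA (X ω) - h (X ω)) * indB ω) P := by
    refine integrable_of_bounded'
      ((((hindA_meas.comp hX).sub (hhcont.measurable.comp hX)).mul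
        hindB_meas).aestronglyMeasurable) 2 fun ω => ?_
    rw [abs_mul]
    have h1 := hdiff_bdd (X ω)
    have h2 : |indB ω| ≤ 1 := abs_indicator_one_le B (Y ω)
    nlinarith [abs_nonneg (indA (X ω) - h (X ω)), abs_nonneg (indB ω)]
  -- I1 : the quantity to bound
  have hI1 : ∫ ω, (indA (X ω) - gA) * indB ω ∂P = a - gA * b := by
    have heq : (fun ω => (indA (X ω) - gA) * indB ω)
        = fun ω => indA (X ω) * indB ω - gA * indB ω := by
      funext ω; ring
    rw [heq, integral_sub iAB (iB.const_mul gA), ha_eq, integral_const_mul, hb_eq]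
  have hh_intP : Integrable (fun ω => h (X ω) * indB ω) P := by
    refine integrable_of_bounded'
      (((hhcont.measurable.comp hX).mul hindB_meas).aestronglyMeasurable) 1 fun ω => ?_
    rw [abs_mul]
    have h1 : |h (X ω)| ≤ 1 := by rw [abs_of_nonneg (hh0 (X ω))]; exact hh1 (X ω)
    have h2 : |indB ω| ≤ 1 := abs_indicator_one_le B (Y ω)
    nlinarith [abs_nonneg (h (X ω)), abs_nonneg (indB ω)]
  have E2 : ∫ ω, (h (X ω) - c) * indB ω ∂P
      = (∫ ω, h (X ω) * indB ω ∂P) - c * b := by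
    have heq : (fun ω => (h (X ω) - c) * indB ω)
        = fun ω => h (X ω) * indB ω - c * indB ω := by
      funext ω; ring
    rw [heq, integral_sub hh_intP (iB.const_mul c), integral_const_mul, hb_eq]
  have E3 : ∫ ω, (indA (X ω) - h (X ω)) * indB ω ∂P
      = a - ∫ ω, h (X ω) * indB ω ∂P := by
    have heq : (fun ω => (indA (X ω) - h (X ω)) * indB ω)
        = fun ω => indA (X ω) * indB ω - h (X ω) * indB ω := by
      funext ω; ring
    rw [heq, integral_sub iAB hh_intP, ha_eq]
  -- bound on the first error term
  have e1 : |∫ ω, (indA (X ω) - h (X ω)) * indB ω ∂P| ≤ ε/3 := by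
    have hptw : ∀ ω, ‖(indA (X ω) - h (X ω)) * indB ω‖ ≤ |indA (X ω) - h (X ω)| := by
      intro ω
      rw [Real.norm_eq_abs, abs_mul]
      calc |indA (X ω) - h (X ω)| * |indB ω| ≤ |indA (X ω) - h (X ω)| * 1 :=
        mul_le_mul_of_nonneg_left (abs_indicator_one_le B _) (abs_nonneg _)
      _ = _ := mul_one _
    have hintP : Integrable (fun ω => |indA (X ω) - h (X ω)|) P := by
      refine integrable_of_bounded'
        (((hindA_meas.comp hX).sub (hhcont.measurable.comp hX)).abs.aestronglyMeasurable)
        2 fun ω => by rw [abs_abs]; exact hdiff_bdd _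
    have hmap : ∫ ω, |indA (X ω) - h (X ω)| ∂P = ∫ x, |indA x - h x| ∂(P.map X) := by
      rw [integral_map hX.aemeasurable hdiff_meas.aestronglyMeasurable]
    calc |∫ ω, (indA (X ω) - h (X ω)) * indB ω ∂P|
        ≤ ∫ ω, ‖(indA (X ω) - h (X ω)) * indB ω‖ ∂P := by
          rw [← Real.norm_eq_abs]; exact norm_integral_le_integral_norm _
    _ ≤ ∫ ω, |indA (X ω) - h (X ω)| ∂P :=
        integral_mono_of_nonneg (Eventually.of_forall fun ω => norm_nonneg _)
          hintP (Eventually.of_forall hptw)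
    _ = ∫ x, |indA x - h x| ∂(P.map X) := hmap
    _ ≤ ε/3 := hδ1
  -- bound on the second error term
  have e2 : |gA - c| ≤ ε/3 := by
    have hintA_γ : Integrable indA γ :=
      integrable_of_bounded' hindA_meas.aestronglyMeasurable 1 (abs_indicator_one_le A)
    have : gA - c = ∫ x, (indA x - h x) ∂γ := by
      rw [integral_sub hintA_γ hintH_γ, hgA_eq, hc_def]
    rw [this]
    calc |∫ x, (indA x - h x) ∂γ| ≤ ∫ x, ‖indA x - h x‖ ∂γ := by
          rw [← Real.norm_eq_abs]; exact norm_integral_le_integral_norm _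
    _ = ∫ x, |indA x - h x| ∂γ := by congr 1
    _ ≤ ε/3 := hδ2
  -- the Stein term
  have hstein : |∫ ω, (h (X ω) - c) * indB ω ∂P| ≤ steinSup P X Y := by
    have heq : (fun ω => (h (X ω) - c) * indB ω)
        = fun ω => (deriv f (X ω) - X ω * f (X ω)) *
          B.indicator (fun _ => (1:ℝ)) (Y ω) := by
      funext ω
      rw [hfeq (X ω), hindB_def]
    rw [heq]
    exact le_steinSup P X Y hXint ⟨hfAC, hfb, hfd⟩ hB
  have t1 : |(gA - c) * b| ≤ ε/3 := by
    rw [abs_mul, abs_of_nonneg hb0]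
    nlinarith [abs_nonneg (gA - c)]
  have t3 : a - gA * b = (∫ ω, (h (X ω) - c) * indB ω ∂P)
      + ((∫ ω, (indA (X ω) - h (X ω)) * indB ω ∂P) - (gA - c) * b) := by
    rw [E2, E3]; ring
  have t4 := abs_add_le (∫ ω, (h (X ω) - c) * indB ω ∂P)
      ((∫ ω, (indA (X ω) - h (X ω)) * indB ω ∂P) - (gA - c) * b)
  have t5 := abs_sub (∫ ω, (indA (X ω) - h (X ω)) * indB ω ∂P) ((gA - c) * b)
  rw [t3]
  linarith [hstein, e1]

end main

/-- The product total variation pseudo-distance between two measures on `ℝ × ℝ`: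
`d_PTV(μ, ν) = sup_{A, B Borel} |μ(A × B) − ν(A × B)|`. -/
noncomputable def dPTV (μ ν : Measure (ℝ × ℝ)) : ℝ :=
  ⨆ (A : Set ℝ) (_ : MeasurableSet A) (B : Set ℝ) (_ : MeasurableSet B),
    |(μ (A ×ˢ B)).toReal - (ν (A ×ˢ B)).toReal|

/-- **Normal case, product total variation: bound.**
Let `X, Y, M : Ω → ℝ` be random variables with `X` integrable, `M ~ 𝒩(0,1)` independent
of `Y`, and let `E` be the class of absolutely continuous `f : ℝ → ℝ` with
`‖f‖_∞ ≤ √(π/2)` and `‖f′‖_∞ ≤ 2`.  Then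
`d_PTV(ℙ_{(X,Y)}, ℙ_M ⊗ ℙ_Y) ≤ sup_{f ∈ E, B Borel} |E[(f′(X) − X f(X)) · 1_B(Y)]|`. -/
theorem gaussian_dPTV_le_sup_stein
    {Ω : Type*} {mΩ : MeasurableSpace Ω} (P : Measure Ω) [IsProbabilityMeasure P]
    (X Y M : Ω → ℝ) (hX : Measurable X) (hY : Measurable Y) (hM : Measurable M)
    (hXint : Integrable X P)
    (hMlaw : P.map M = gaussianReal 0 1) (hMY : IndepFun M Y P) :
    dPTV (P.map (fun ω => (X ω, Y ω))) ((P.map M).prod (P.map Y)) ≤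
      ⨆ (f : ℝ → ℝ) (_ : AbsolutelyContinuousFun f ∧
          (∀ x : ℝ, |f x| ≤ Real.sqrt (π / 2)) ∧ (∀ x : ℝ, |deriv f x| ≤ 2))
        (B : Set ℝ) (_ : MeasurableSet B),
        |∫ ω, (deriv f (X ω) - X ω * f (X ω)) *
          B.indicator (fun _ => (1 : ℝ)) (Y ω) ∂P| := by
  rw [hMlaw]
  show dPTV (P.map fun ω => (X ω, Y ω)) ((gaussianReal 0 1).prod (P.map Y))
      ≤ steinSup P X Y
  have h0 := steinSup_nonneg P X Y hXint
  unfold dPTV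
  refine Real.iSup_le (fun A => Real.iSup_le (fun hA => Real.iSup_le (fun B =>
    Real.iSup_le (fun hB => ?_) h0) h0) h0) h0
  have hμ : (P.map (fun ω => (X ω, Y ω))) (A ×ˢ B) = P (X ⁻¹' A ∩ Y ⁻¹' B) := by
    rw [Measure.map_apply (hX.prodMk hY) (hA.prod hB), Set.mk_preimage_prod]
  have hν : ((gaussianReal 0 1).prod (P.map Y)) (A ×ˢ B)
      = (gaussianReal 0 1) A * P (Y ⁻¹' B) := by
    rw [Measure.prod_prod, Measure.map_apply hY hB]
  rw [hμ, hν, ENNReal.toReal_mul]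
  exact core_bound P X Y hX hY hXint hA hB
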